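/- arXiv:2505.11478 — 4 statements merged into one kernel-verified Lean document; each statement's English description precedes it below -/
import Mathlib

section
/- Let H ≥ 1 and define α_t = (H+1)/(H+t) for t ≥ 1, α_t^0 = ∏_{j=1}^t (1-α_j), and α_t^i = α_i ∏_{j=i+1}^t (1-α_j) for 1 ≤ i ≤ t. Then for every t ≥ 1, 1/√t ≤ ∑_{i=1}^t α_t^i/√i ≤ 2/√t. -/
/-- Learning rate α_t = (H+1)/(H+t). -/
noncomputable def lrate (H t : ℕ) : ℝ := (H + 1) / (H + t)

/-- Cumulative weight α_t^i = α_i ∏_{j=i+1}^t (1 - α_j). -/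
noncomputable def lweight (H i t : ℕ) : ℝ :=
  lrate H i * ∏ j ∈ Finset.Icc (i + 1) t, (1 - lrate H j)

/-!
Write `S t = ∑_{i ≤ t} α_t^i / √i`. Since `α_{t+1}^i = (1 - α_{t+1}) α_t^i` for `i ≤ t` and
`α_{t+1}^{t+1} = α_{t+1}`, we have `S (t+1) = (1 - α_{t+1}) S t + α_{t+1} / √(t+1)`, and `S 1 = 1`.
The lower bound passes through this recursion because `1/√t` decreases and `α_{t+1} ≤ 1`. For the upper
bound, `2 √t √(t+1) ≤ 2t + 1` reduces the step to `α_{t+1} ≥ 1/(t+1)`.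
-/

lemma lrate_one (H : ℕ) : lrate H 1 = 1 := by
  unfold lrate; push_cast; exact div_self (by positivity)

lemma lrate_succ_le_one (H t : ℕ) : lrate H (t + 1) ≤ 1 := by
  unfold lrate; push_cast
  rw [div_le_one (by positivity)]
  linarith [(t.cast_nonneg : (0 : ℝ) ≤ t)]

lemma one_le_mul_lrate_succ (H t : ℕ) : 1 ≤ ((t : ℝ) + 1) * lrate H (t + 1) := by
  unfold lrate; push_cast
  rw [← mul_div_assoc, le_div_iff₀ (by positivity)]
  nlinarith [mul_nonneg (t.cast_nonneg : (0 : ℝ) ≤ t) (H.cast_nonneg : (0 : ℝ) ≤ H)]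

lemma lweight_self (H t : ℕ) : lweight H t t = lrate H t := by
  simp [lweight]

lemma lweight_succ {H i t : ℕ} (hi : i ≤ t) :
    lweight H i (t + 1) = (1 - lrate H (t + 1)) * lweight H i t := by
  unfold lweight
  rw [Finset.prod_Icc_succ_top (by omega)]
  ring

lemma sum_lweight_div_succ (H t : ℕ) (f : ℕ → ℝ) :
    ∑ i ∈ Finset.Icc 1 (t + 1), lweight H i (t + 1) / f i =
      (1 - lrate H (t + 1)) * ∑ i ∈ Finset.Icc 1 t, lweight H i t / f i +
        lrate H (t + 1) / f (t + 1) := by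
  rw [Finset.sum_Icc_succ_top (by omega), Finset.mul_sum, lweight_self]
  congr 1
  refine Finset.sum_congr rfl fun i hi => ?_
  rw [lweight_succ (Finset.mem_Icc.1 hi).2, mul_div_assoc]

lemma one_div_sqrt_succ_le_convex_step {t α S : ℝ} (ht : 0 < t) (hα₁ : α ≤ 1)
    (hS : 1 / √t ≤ S) : 1 / √(t + 1) ≤ (1 - α) * S + α / √(t + 1) := by
  have hmono : 1 / √(t + 1) ≤ 1 / √t :=
    one_div_le_one_div_of_le (Real.sqrt_pos.2 ht) (Real.sqrt_le_sqrt (by linarith))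
  calc 1 / √(t + 1) = (1 - α) * (1 / √(t + 1)) + α / √(t + 1) := by ring
    _ ≤ (1 - α) * S + α / √(t + 1) := by gcongr; linarith

lemma two_mul_sqrt_mul_sqrt_succ_le {t : ℝ} (ht : 0 ≤ t) : 2 * √t * √(t + 1) ≤ 2 * t + 1 := by
  nlinarith [sq_nonneg (√t - √(t + 1)), Real.sq_sqrt ht, Real.sq_sqrt (by linarith : 0 ≤ t + 1)]

lemma convex_step_le_two_div_sqrt_succ {t α S : ℝ} (ht : 0 < t) (hα₁ : α ≤ 1)
    (hα : 1 ≤ (t + 1) * α) (hS : S ≤ 2 / √t) :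
    (1 - α) * S + α / √(t + 1) ≤ 2 / √(t + 1) := by
  have ha : 0 < √t := Real.sqrt_pos.2 ht
  have hb : 0 < √(t + 1) := Real.sqrt_pos.2 (by linarith)
  have hab := two_mul_sqrt_mul_sqrt_succ_le ht.le
  have key : 2 * (1 - α) * √(t + 1) ≤ (2 - α) * √t := by
    refine le_of_mul_le_mul_right ?_ ha
    nlinarith [mul_le_mul_of_nonneg_left hab (by linarith : 0 ≤ 1 - α), Real.sq_sqrt ht.le]
  calc (1 - α) * S + α / √(t + 1) ≤ (1 - α) * (2 / √t) + α / √(t + 1) := by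
        gcongr
    _ ≤ 2 / √(t + 1) := by
        rw [mul_div_assoc', div_add_div _ _ ha.ne' hb.ne', div_le_div_iff₀ (by positivity) hb]
        nlinarith [mul_le_mul_of_nonneg_right key hb.le]

theorem stmt0_general (H : ℕ) (t : ℕ) (ht : 1 ≤ t) :
    1 / Real.sqrt t ≤ ∑ i ∈ Finset.Icc 1 t, lweight H i t / Real.sqrt i ∧
    ∑ i ∈ Finset.Icc 1 t, lweight H i t / Real.sqrt i ≤ 2 / Real.sqrt t := by
  induction t, ht using Nat.le_induction with
  | base => simp [lweight_self, lrate_one]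
  | succ t ht ih =>
    have ht' : (0 : ℝ) < t := by exact_mod_cast ht
    rw [sum_lweight_div_succ H t fun i => √i]
    push_cast
    exact ⟨one_div_sqrt_succ_le_convex_step ht' (lrate_succ_le_one H t) ih.1,
      convex_step_le_two_div_sqrt_succ ht' (lrate_succ_le_one H t) (one_le_mul_lrate_succ H t)
        ih.2⟩

theorem stmt0 (H : ℕ) (hH : 1 ≤ H) (t : ℕ) (ht : 1 ≤ t) :
    1 / Real.sqrt t ≤ ∑ i ∈ Finset.Icc 1 t, lweight H i t / Real.sqrt i ∧
    ∑ i ∈ Finset.Icc 1 t, lweight H i t / Real.sqrt i ≤ 2 / Real.sqrt t :=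
  stmt0_general H t ht
end

section
/- Let H ≥ 1 and define α_t = (H+1)/(H+t), α_t^i = α_i ∏_{j=i+1}^t (1-α_j) for 1 ≤ i ≤ t. Then for every i ≥ 1, the infinite sum ∑_{t=i}^∞ α_t^i equals 1 + 1/H. -/
/-!
With `P_t = ∏_{k=i}^{t-1} k/(H+k)` one has `1 - α_{t+1} = t/(H+t+1)`, hence
`α_t^i = (H+1)/(H+t) · P_t`, and `1 - t/(H+t) = H/(H+t)` turns this into the telescoping
difference `(1 + 1/H) (P_t - P_{t+1})`. So `(1 + 1/H) P_t` is the tail `∑_{s ≥ t} α_s^i`,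
and the series sums to `(1 + 1/H) P_i = 1 + 1/H`: for `H ≥ 1` the sequence `t P_t` is
non-increasing, so `P_t ≤ i/t → 0`.
-/

open Filter Topology Finset

theorem hasSum_sub_succ_of_antitone {f : ℕ → ℝ} {l : ℝ} (hf : Antitone f)
    (hl : Tendsto f atTop (𝓝 l)) : HasSum (fun n => f n - f (n + 1)) (f 0 - l) := by
  refine (hasSum_iff_tendsto_nat_of_nonneg (fun n => sub_nonneg.2 (hf n.le_succ)) _).2 ?_
  simpa only [sum_range_sub'] using hl.const_sub (f 0)

noncomputable def lprod (H i t : ℕ) : ℝ := ∏ k ∈ Ico i t, (k : ℝ) / (H + k)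

section lprod

variable {H i t : ℕ}

@[simp]
theorem lprod_self : lprod H i i = 1 := by
  simp [lprod]

theorem lprod_succ (ht : i ≤ t) : lprod H i (t + 1) = lprod H i t * (t / (H + t)) :=
  prod_Ico_succ_top ht _

theorem lprod_nonneg : 0 ≤ lprod H i t :=
  prod_nonneg fun _ _ => by positivity

theorem lprod_succ_le (ht : i ≤ t) : lprod H i (t + 1) ≤ lprod H i t := by
  rw [lprod_succ ht]
  exact mul_le_of_le_one_right lprod_nonneg (div_le_one_of_le₀ (by simp) (by positivity))

theorem natCast_mul_lprod_le (hH : 1 ≤ H) (ht : i ≤ t) : t * lprod H i t ≤ i := by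
  induction t, ht using Nat.le_induction with
  | base => simp
  | succ t ht ih =>
    have hH' : (1 : ℝ) ≤ H := by exact_mod_cast hH
    have hratio : (t + 1 : ℝ) * (t / (H + t)) ≤ t := by
      rw [mul_div_assoc', div_le_iff₀ (by positivity)]
      nlinarith [(Nat.cast_nonneg t : (0 : ℝ) ≤ t)]
    calc ((t + 1 : ℕ) : ℝ) * lprod H i (t + 1)
        = (t + 1 : ℝ) * (t / (H + t)) * lprod H i t := by rw [lprod_succ ht]; push_cast; ring
      _ ≤ t * lprod H i t := mul_le_mul_of_nonneg_right hratio lprod_nonneg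
      _ ≤ i := ih

theorem tendsto_lprod_atTop (hH : 1 ≤ H) : Tendsto (lprod H i) atTop (𝓝 0) := by
  refine squeeze_zero' (.of_forall fun _ => lprod_nonneg) ?_
    (tendsto_const_div_atTop_nhds_zero_nat (i : ℝ))
  filter_upwards [eventually_ge_atTop (max i 1)] with t ht
  have ht0 : (0 : ℝ) < t := by exact_mod_cast (le_of_max_le_right ht)
  rw [le_div_iff₀ ht0, mul_comm]
  exact natCast_mul_lprod_le hH (le_of_max_le_left ht)

end lprod

theorem one_sub_lrate_succ (H t : ℕ) : 1 - lrate H (t + 1) = t / (H + t + 1) := by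
  rw [lrate, Nat.cast_succ, ← add_assoc]
  field_simp
  ring

theorem lweight_eq_mul_lprod {H i t : ℕ} (ht : i ≤ t) :
    lweight H i t = (H + 1) / (H + t) * lprod H i t := by
  induction t, ht using Nat.le_induction with
  | base => simp [lweight, lrate]
  | succ t ht ih =>
    have hstep : lweight H i (t + 1) = lweight H i t * (1 - lrate H (t + 1)) := by
      rw [lweight, lweight, prod_Icc_succ_top (by omega), mul_assoc]
    rw [hstep, ih, one_sub_lrate_succ, lprod_succ ht]
    push_cast
    ring

theorem lweight_eq_sub {H i t : ℕ} (hH : H ≠ 0) (ht : i ≤ t) :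
    lweight H i t = (1 + 1 / H) * lprod H i t - (1 + 1 / H) * lprod H i (t + 1) := by
  rw [lweight_eq_mul_lprod ht, lprod_succ ht]
  have : (H : ℝ) ≠ 0 := by exact_mod_cast hH
  field_simp
  ring

theorem stmt2_general (H : ℕ) (hH : 1 ≤ H) (i : ℕ) :
    ∑' t : ℕ, (if i ≤ t then lweight H i t else 0) = 1 + 1 / (H : ℝ) := by
  set c : ℝ := 1 + 1 / H
  have hanti : Antitone fun n => c * lprod H i (n + i) := antitone_nat_of_succ_le fun n => by
    rw [add_right_comm]
    exact mul_le_mul_of_nonneg_left (lprod_succ_le (by omega)) (by positivity)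
  have hlim : Tendsto (fun n => c * lprod H i (n + i)) atTop (𝓝 0) := by
    simpa using ((tendsto_lprod_atTop hH).comp (tendsto_add_atTop_nat i)).const_mul c
  have hsum := hasSum_sub_succ_of_antitone hanti hlim
  simp only [zero_add, lprod_self, mul_one, sub_zero] at hsum
  have hshift : HasSum (fun n => if i ≤ n + i then lweight H i (n + i) else 0) c :=
    hsum.congr_fun fun n => by
      rw [if_pos (by omega), lweight_eq_sub (by omega) (by omega), add_right_comm]
  have hhead : ∑ t ∈ range i, (if i ≤ t then lweight H i t else 0) = 0 :=
    sum_eq_zero fun t ht => if_neg (by simpa using ht)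
  refine ((hasSum_nat_add_iff' i).mp ?_).tsum_eq
  rwa [hhead, sub_zero]

theorem stmt2 (H : ℕ) (hH : 1 ≤ H) (i : ℕ) (hi : 1 ≤ i) :
    ∑' t : ℕ, (if i ≤ t then lweight H i t else 0) = 1 + 1 / (H : ℝ) :=
  stmt2_general H hH i
end

section
/- In a finite-horizon MDP with horizon H, suppose the reward at each step h is replaced by r'_h = r_h + φ_{h+1}(s_{h+1}) − φ_h(s_h) for potential functions φ_h : S → ℝ with φ_{H+1} ≡ 0. Then for every policy π and every state s, the shaped value function satisfies V'^π_h(s) = V^π_h(s) − φ_h(s); consequently the set of optimal policies of the shaped MDP equals the set of optimal policies of the original MDP. -/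
/-- Value function of a finite-horizon MDP with (possibly next-state-dependent)
reward `r`, transition kernel `T`, deterministic policy `π`; the first argument
is the remaining fuel (number of steps), the second the current step index. -/
noncomputable def Vgen {S X : Type*} [Fintype S] (T : ℕ → S → X → S → ℝ)
    (r : ℕ → S → X → S → ℝ) (π : ℕ → S → X) : ℕ → ℕ → S → ℝ
  | 0, _, _ => 0
  | n + 1, h, s =>
      ∑ s' : S, T h s (π h s) s' * (r h s (π h s) s' + Vgen T r π n (h + 1) s')

lemma shaped_key {S X : Type*} [Fintype S] (H : ℕ)
    (T : ℕ → S → X → S → ℝ) (r : ℕ → S → X → ℝ) (φ : ℕ → S → ℝ)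
    (hT : ∀ h s x, ∑ s' : S, T h s x s' = 1)
    (hφ : ∀ s, φ (H + 1) s = 0) (π : ℕ → S → X) :
    ∀ n h, h + n = H + 1 → ∀ s : S,
      Vgen T (fun h s x s' => r h s x + φ (h + 1) s' - φ h s) π n h s
        = Vgen T (fun h s x _ => r h s x) π n h s - φ h s := by
  intro n
  induction n with
  | zero => intro h hh s; simp [Vgen]; rw [Nat.add_zero] at hh; subst hh; exact hφ s
  | succ n ih =>
    intro h hh s
    have hh' : (h + 1) + n = H + 1 := by omega
    simp only [Vgen]
    have : ∀ s' : S,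
        T h s (π h s) s' * (r h s (π h s) + φ (h + 1) s' - φ h s
          + Vgen T (fun h s x s' => r h s x + φ (h + 1) s' - φ h s) π n (h + 1) s')
        = T h s (π h s) s' * (r h s (π h s)
            + Vgen T (fun h s x _ => r h s x) π n (h + 1) s')
          - T h s (π h s) s' * φ h s := by
      intro s'
      rw [ih (h + 1) hh' s']
      ring
    rw [Finset.sum_congr rfl fun s' _ => this s', Finset.sum_sub_distrib,
      ← Finset.sum_mul, hT]
    ring

theorem stmt6 {S X : Type*} [Fintype S] [Fintype X] [Nonempty S] [Nonempty X]
    (H : ℕ) (hH : 1 ≤ H)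
    (T : ℕ → S → X → S → ℝ) (r : ℕ → S → X → ℝ) (φ : ℕ → S → ℝ)
    (hT : ∀ h s x, ∑ s' : S, T h s x s' = 1)
    (hφ : ∀ s, φ (H + 1) s = 0) :
    (∀ (π : ℕ → S → X) (h : ℕ), 1 ≤ h → h ≤ H + 1 → ∀ s : S,
      Vgen T (fun h s x s' => r h s x + φ (h + 1) s' - φ h s) π (H + 1 - h) h s
        = Vgen T (fun h s x _ => r h s x) π (H + 1 - h) h s - φ h s) ∧
    (∀ π : ℕ → S → X,
      (∀ (π' : ℕ → S → X) (s : S),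
        Vgen T (fun h s x _ => r h s x) π' H 1 s ≤
          Vgen T (fun h s x _ => r h s x) π H 1 s) ↔
      (∀ (π' : ℕ → S → X) (s : S),
        Vgen T (fun h s x s' => r h s x + φ (h + 1) s' - φ h s) π' H 1 s ≤
          Vgen T (fun h s x s' => r h s x + φ (h + 1) s' - φ h s) π H 1 s)) := by
  have key := shaped_key H T r φ hT hφ
  have hH1 : H + 1 - 1 = H := by omega
  constructor
  · intro π h h1 h2 s
    exact key π (H + 1 - h) h (by omega) s
  · intro π
    have e : ∀ (π' : ℕ → S → X) (s : S),
        Vgen T (fun h s x s' => r h s x + φ (h + 1) s' - φ h s) π' H 1 s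
          = Vgen T (fun h s x _ => r h s x) π' H 1 s - φ 1 s := by
      intro π' s
      have := key π' H 1 (by omega) s
      simpa using this
    constructor
    · intro hopt π' s
      rw [e, e]
      linarith [hopt π' s]
    · intro hopt π' s
      have := hopt π' s
      rw [e, e] at this
      linarith
end

section
/- Define a sequence by y₀ = 0, y₁ = 1, and, for a fixed η ∈ (0,1) (playing the role of εδ), y_{k+1} = ½(y_k + z_k) where z_k = min_{1≤i≤k} [ y_i + (η/(1−η))(y_i − y_{i−1}) ]. Then the sequence is strictly increasing: y₁ < y₂ < ⋯ < y_m for every m, and for each k ∈ {2,…,m}, (y_m/y_k)(1−η) + (y_{k−1}/y_k)η < 1. -/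
/-!
Write `c = η / (1 - η)` and `g i = y i + c (y i - y (i - 1))`, so that `z k` is the minimum of
`g` over `1 ≤ i ≤ k`. The invariant is `y k < z k`: it makes `y (k + 1)`, the midpoint of `y k`
and `z k`, lie strictly between them, and then `g (k + 1) > y (k + 1)` because the sequence just
increased, so `z (k + 1) = min (z k) (g (k + 1)) > y (k + 1)`. The final inequality, after
clearing denominators, is `y m < g k`, which follows from `y m < z m ≤ g k`.
-/

section MidpointRecursion

variable {c : ℝ} {y z : ℕ → ℝ}

theorem lt_succ_and_succ_lt_of_midpoint_rec
    (hrec : ∀ k, 1 ≤ k → y (k + 1) = (y k + z k) / 2) {k : ℕ} (hk : 1 ≤ k) (hyz : y k < z k) :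
    y k < y (k + 1) ∧ y (k + 1) < z k := by
  rw [hrec k hk]
  constructor <;> linarith

variable (hz : ∀ k (hk : 1 ≤ k), z k =
  Finset.inf' (Finset.Icc 1 k) (Finset.nonempty_Icc.mpr hk)
    (fun i => y i + c * (y i - y (i - 1))))
include hz

theorem le_of_eq_inf'_Icc {i k : ℕ} (hi : 1 ≤ i) (hik : i ≤ k) :
    z k ≤ y i + c * (y i - y (i - 1)) := by
  rw [hz k (hi.trans hik)]
  exact Finset.inf'_le _ (Finset.mem_Icc.mpr ⟨hi, hik⟩)

theorem lt_of_eq_inf'_Icc_of_midpoint_rec (hc : 0 < c) (h01 : y 0 < y 1)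
    (hrec : ∀ k, 1 ≤ k → y (k + 1) = (y k + z k) / 2) :
    ∀ k, 1 ≤ k → y k < z k := by
  intro k hk
  induction k, hk using Nat.le_induction with
  | base =>
    simp only [hz 1 le_rfl, Finset.Icc_self, Finset.inf'_singleton]
    linarith [mul_pos hc (sub_pos.mpr h01)]
  | succ k hk ih =>
    obtain ⟨hinc, hlt⟩ := lt_succ_and_succ_lt_of_midpoint_rec hrec hk ih
    rw [hz (k + 1) (by omega), Finset.lt_inf'_iff]
    intro i hi
    obtain ⟨hi1, hik⟩ := Finset.mem_Icc.mp hi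
    rcases hik.lt_or_eq with hik | rfl
    · linarith [le_of_eq_inf'_Icc hz hi1 (Nat.lt_succ_iff.mp hik)]
    · rw [Nat.add_sub_cancel]
      linarith [mul_pos hc (sub_pos.mpr hinc)]

end MidpointRecursion

theorem div_mul_add_div_mul_lt_one_iff {η a b d : ℝ} (hη1 : η < 1) (hb : 0 < b) :
    a / b * (1 - η) + d / b * η < 1 ↔ a < b + η / (1 - η) * (b - d) := by
  have h1η : 0 < 1 - η := sub_pos.mpr hη1
  have hrhs : b + η / (1 - η) * (b - d) = (b - η * d) / (1 - η) := by
    field_simp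
    ring
  rw [div_mul_eq_mul_div, div_mul_eq_mul_div, ← add_div, div_lt_one hb, hrhs, lt_div_iff₀ h1η]
  constructor <;> intro h <;> linarith

theorem stmt14 (η : ℝ) (hη0 : 0 < η) (hη1 : η < 1) (y z : ℕ → ℝ)
    (hy0 : y 0 = 0) (hy1 : y 1 = 1)
    (hz : ∀ k (hk : 1 ≤ k), z k =
      Finset.inf' (Finset.Icc 1 k) (Finset.nonempty_Icc.mpr hk)
        (fun i => y i + η / (1 - η) * (y i - y (i - 1))))
    (hrec : ∀ k, 1 ≤ k → y (k + 1) = (y k + z k) / 2) :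
    (∀ k, 1 ≤ k → y k < y (k + 1)) ∧
    (∀ m k, 2 ≤ k → k ≤ m → (y m / y k) * (1 - η) + (y (k - 1) / y k) * η < 1) := by
  have hyz := lt_of_eq_inf'_Icc_of_midpoint_rec hz (div_pos hη0 (sub_pos.mpr hη1)) (by linarith) hrec
  have hinc : ∀ k, 1 ≤ k → y k < y (k + 1) := fun k hk =>
    (lt_succ_and_succ_lt_of_midpoint_rec hrec hk (hyz k hk)).1
  refine ⟨hinc, fun m k hk hkm => ?_⟩
  have hyk : 0 < y k := by
    have h1k : y 1 < y k := Nat.rel_of_forall_rel_succ_of_le_of_lt (· < ·) hinc le_rfl hk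
    linarith
  rw [div_mul_add_div_mul_lt_one_iff hη1 hyk]
  calc y m < z m := hyz m (by omega)
    _ ≤ _ := le_of_eq_inf'_Icc hz (by omega) hkm
end
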